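/- Model C is monotone: for all configurations z, z' ∈ {∘,•}^ℤ and every update configuration u ∈ 𝒰^ℤ, if z ≤ z' (coordinate-wise, with ∘ ≤ •) then 𝒞(z,u) ≤ 𝒞(z',u). (Lemma 5.1.) -/
import Mathlib

/-!
Conventions: a configuration of model C is `z : ℤ → Bool` (`false` = ∘ empty,
`true` = • particle, so the order `false ≤ true` on `Bool` is `∘ ≤ •`);
an update configuration is `u : ℤ → Bool` (`true` = ↑, `false` = →).
-/

/-- The local map `𝒞` of model C: the `i`-th coordinate of `𝒞(z,u)` is `•` iff
`(z_{i-1}z_i, u_{i-1}u_i) ∈ {(•∘, →⋅), (∘•, ⋅↑), (••, ↑↑), (••, →⋅)}`. -/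
def modelC (z u : ℤ → Bool) : ℤ → Bool := fun i =>
  match z (i - 1), z i with
  | true, false => !u (i - 1)
  | false, true => u i
  | true, true => !u (i - 1) || u i
  | false, false => false

/-- Lemma 5.1: model C is monotone. -/
theorem modelC_monotone (z z' u : ℤ → Bool) (h : z ≤ z') :
    modelC z u ≤ modelC z' u := by
  intro i
  have h1 := h (i - 1)
  have h2 := h i
  simp only [modelC]
  revert h1 h2
  cases z (i - 1) <;> cases z i <;> cases z' (i - 1) <;> cases z' i <;>
    cases u (i - 1) <;> cases u i <;> simp
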